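/- arXiv:2311.06813 — 2 statements merged into one kernel-verified Lean document; each statement's English description precedes it below -/
import Mathlib

section
/- Let (a_k) be a regular sequence in ℛ whose elements are all at most finite, converging weakly to an at most finite a ∈ ℛ with a[0] ≠ 0. Suppose b_k ∈ ℛ satisfy a_k·b_k = 1 for all k, and b ∈ ℛ satisfies a·b = 1. Then the sequence (b_k) is regular and converges weakly to b (i.e. 1/a_k →wk 1/a). -/
open Pointwise

noncomputable section

/-- A set of rational numbers is *left-finite* if below every rational number
it has only finitely many elements. -/
def LeftFinite (A : Set ℚ) : Prop := ∀ r : ℚ, {q ∈ A | q < r}.Finite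

theorem LeftFinite.mono {A B : Set ℚ} (h : LeftFinite B) (hAB : A ⊆ B) : LeftFinite A :=
  fun r => (h r).subset fun _ hq => ⟨hAB hq.1, hq.2⟩

theorem LeftFinite.union {A B : Set ℚ} (hA : LeftFinite A) (hB : LeftFinite B) :
    LeftFinite (A ∪ B) := by
  intro r
  have hsub : {q ∈ A ∪ B | q < r} ⊆ {q ∈ A | q < r} ∪ {q ∈ B | q < r} := by
    rintro q ⟨hq | hq, hr⟩
    · exact Or.inl ⟨hq, hr⟩
    · exact Or.inr ⟨hq, hr⟩
  exact ((hA r).union (hB r)).subset hsub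

theorem Set.Finite.leftFinite {A : Set ℚ} (h : A.Finite) : LeftFinite A :=
  fun _ => h.subset fun _ hq => hq.1

theorem LeftFinite.exists_lb {A : Set ℚ} (h : LeftFinite A) : ∃ m : ℚ, ∀ a ∈ A, m ≤ a := by
  rcases A.eq_empty_or_nonempty with rfl | ⟨a₀, ha₀⟩
  · exact ⟨0, by simp⟩
  · obtain ⟨m, hm⟩ := (h a₀).bddBelow
    refine ⟨min m a₀, fun a ha => ?_⟩
    rcases lt_or_ge a a₀ with hlt | hle
    · exact le_trans (min_le_left _ _) (hm ⟨ha, hlt⟩)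
    · exact le_trans (min_le_right _ _) hle

theorem LeftFinite.addSet {A B : Set ℚ} (hA : LeftFinite A) (hB : LeftFinite B) :
    LeftFinite (A + B) := by
  obtain ⟨mA, hmA⟩ := hA.exists_lb
  obtain ⟨mB, hmB⟩ := hB.exists_lb
  intro r
  apply Set.Finite.subset (((hA (r - mB)).prod (hB (r - mA))).image fun p : ℚ × ℚ => p.1 + p.2)
  rintro q ⟨hq, hqr⟩
  rw [Set.mem_add] at hq
  obtain ⟨a, ha, b, hb, rfl⟩ := hq
  exact ⟨(a, b), ⟨⟨ha, by linarith [hmB b hb]⟩, hb, by linarith [hmA a ha]⟩, rfl⟩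

/-- The Levi-Civita field over a coefficient ring `K`, realized as the subring of
Hahn series over `ℚ` consisting of those series with left-finite support.
(An element is a function `ℚ → K` with left-finite support; addition is pointwise
and multiplication is convolution.) -/
def LeviCivitaField (K : Type) [CommRing K] : Subring (HahnSeries ℚ K) where
  carrier := {x | LeftFinite x.support}
  zero_mem' := by
    have h : (0 : HahnSeries ℚ K).support = (∅ : Set ℚ) := HahnSeries.support_zero
    exact Set.Finite.leftFinite (by rw [h]; exact Set.finite_empty)
  one_mem' := by
    refine Set.Finite.leftFinite ((Set.finite_singleton (0 : ℚ)).subset ?_)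
    intro q hq
    by_contra hq0
    have hq0' : q ≠ 0 := by simpa using hq0
    have : (1 : HahnSeries ℚ K).coeff q = 0 := by
      rw [HahnSeries.coeff_one, if_neg hq0']
    exact hq this
  add_mem' := fun {x y} hx hy =>
    LeftFinite.mono (LeftFinite.union hx hy) (HahnSeries.support_add_subset x y)
  neg_mem' := fun {x} hx => LeftFinite.mono hx (le_of_eq HahnSeries.support_neg)
  mul_mem' := fun {x y} hx hy =>
    LeftFinite.mono (LeftFinite.addSet hx hy) HahnSeries.support_mul_subset

namespace LeviCivitaField

variable {K : Type} [CommRing K]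

/-- The coefficient `a[q]` of an element of the Levi-Civita field. -/
def coeff (x : LeviCivitaField K) (q : ℚ) : K := (x : HahnSeries ℚ K).coeff q

/-- The support `supp a` of an element of the Levi-Civita field. -/
def supp (x : LeviCivitaField K) : Set ℚ := (x : HahnSeries ℚ K).support

theorem leftFinite_supp (x : LeviCivitaField K) : LeftFinite (supp x) := x.2

/-- `λ(a)`: the minimum of the support of `a` (for nonzero `a`; `0` for `a = 0`). -/
def lam (x : LeviCivitaField K) : ℚ := (x : HahnSeries ℚ K).order

/-- `a` is at most finite if `a[q] = 0` for all `q < 0`. -/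
def AtMostFinite (x : LeviCivitaField K) : Prop := ∀ q : ℚ, q < 0 → coeff x q = 0

/-- A sequence is regular if the union of the supports of its elements is left-finite. -/
def Regular (a : ℕ → LeviCivitaField K) : Prop := LeftFinite (⋃ n, supp (a n))

/-- The seminorm `‖a‖_r = max {|a[q]| : q ≤ r, a[q] ≠ 0}` (equal to `0` if no such `q` exists). -/
def wnorm [Norm K] (x : LeviCivitaField K) (r : ℝ) : ℝ :=
  sSup ((fun q : ℚ => ‖coeff x q‖) '' {q : ℚ | (q : ℝ) ≤ r ∧ coeff x q ≠ 0})

/-- Weak convergence: `a_n →wk l` iff for every real `r > 0` there is `N` with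
`‖a_n − l‖_{1/r} < r` for all `n > N`. -/
def WeakTendsto [Norm K] (a : ℕ → LeviCivitaField K) (l : LeviCivitaField K) : Prop :=
  ∀ r : ℝ, 0 < r → ∃ N : ℕ, ∀ n : ℕ, n > N → wnorm (a n - l) (1 / r) < r

/-- Positivity on the real Levi-Civita field: `x ≻ 0` iff `x ≠ 0` and `x[λ(x)] > 0`. -/
def Pos (x : LeviCivitaField ℝ) : Prop := x ≠ 0 ∧ 0 < coeff x (lam x)

/-- `x ⪰ 0` on the real Levi-Civita field. -/
def Nonneg (x : LeviCivitaField ℝ) : Prop := x = 0 ∨ Pos x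

/-- `x ⪯ y` on the real Levi-Civita field. -/
def Le (x y : LeviCivitaField ℝ) : Prop := Nonneg (y - x)

/-- An element of the complex Levi-Civita field is *real* if all its coefficients are real;
this identifies `ℛ` with the subring `{z ∈ 𝒞 : z[q] ∈ ℝ for all q}` of `𝒞`. -/
def IsReal (x : LeviCivitaField ℂ) : Prop := ∀ q : ℚ, (coeff x q).im = 0

/-- `x ≻ 0` for elements of `ℛ` viewed inside `𝒞`: `x` is real, nonzero,
and its leading coefficient is positive. -/
def PosC (x : LeviCivitaField ℂ) : Prop := IsReal x ∧ x ≠ 0 ∧ 0 < (coeff x (lam x)).re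

/-- `x ⪰ 0` for elements of `ℛ` viewed inside `𝒞`. -/
def NonnegC (x : LeviCivitaField ℂ) : Prop := x = 0 ∨ PosC x

/-- `x ⪯ y` for elements of `ℛ` viewed inside `𝒞`. -/
def LeC (x y : LeviCivitaField ℂ) : Prop := NonnegC (y - x)

/-- `x ≺ y` for elements of `ℛ` viewed inside `𝒞`. -/
def LtC (x y : LeviCivitaField ℂ) : Prop := PosC (y - x)

/-- Conjugation on the complex Levi-Civita field: `conj(z)[q] = conj (z[q])`. -/
def conj (x : LeviCivitaField ℂ) : LeviCivitaField ℂ :=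
  ⟨⟨fun q => starRingEnd ℂ (coeff x q),
    (x : HahnSeries ℚ ℂ).isPWO_support.mono (fun q hq => by
      simp only [Function.mem_support, ne_eq, map_eq_zero] at hq
      exact hq)⟩,
   LeftFinite.mono x.2 (fun q hq => by
      have hq' : starRingEnd ℂ (coeff x q) ≠ 0 := hq
      have : coeff x q ≠ 0 := fun h => hq' (by rw [h, map_zero])
      exact this)⟩

/-- The monomial `d^q`: the element supported at `{q}` with value `1`. -/
def dpow (q : ℚ) : LeviCivitaField ℂ :=
  ⟨HahnSeries.single q (1 : ℂ),
    Set.Finite.leftFinite ((Set.finite_singleton q).subset HahnSeries.support_single_subset)⟩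

end LeviCivitaField


open LeviCivitaField

namespace LCFAux

open LeviCivitaField Finset

local notation "LCF" => LeviCivitaField ℝ

lemma coeff_def (x : LCF) (q : ℚ) : coeff x q = (x : HahnSeries ℚ ℝ).coeff q := rfl

lemma coe_mul (x y : LCF) :
    ((x * y : LCF) : HahnSeries ℚ ℝ) = (x : HahnSeries ℚ ℝ) * (y : HahnSeries ℚ ℝ) := rfl

lemma coe_one : ((1 : LCF) : HahnSeries ℚ ℝ) = 1 := rfl

lemma coeff_sub (x y : LCF) (q : ℚ) : coeff (x - y) q = coeff x q - coeff y q := by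
  simp [coeff_def, HahnSeries.coeff_sub]

lemma coeff_add (x y : LCF) (q : ℚ) : coeff (x + y) q = coeff x q + coeff y q := by
  simp [coeff_def, HahnSeries.coeff_add]

lemma mem_supp {x : LCF} {q : ℚ} : q ∈ supp x ↔ coeff x q ≠ 0 := Iff.rfl

lemma setFinite (x : LCF) (r : ℝ) : {q : ℚ | (q : ℝ) ≤ r ∧ coeff x q ≠ 0}.Finite := by
  refine (x.2 ((⌈r⌉ : ℚ) + 1)).subset ?_
  rintro q ⟨hq, hne⟩
  refine ⟨hne, ?_⟩
  have h1 : (q : ℝ) ≤ (⌈r⌉ : ℝ) := hq.trans (Int.le_ceil r)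
  have : (q : ℝ) < ((⌈r⌉ : ℚ) : ℝ) + 1 := by push_cast at h1 ⊢; linarith
  exact_mod_cast this

lemma finite_le {X : Set ℚ} (hX : LeftFinite X) (r : ℝ) :
    {q ∈ X | (q : ℝ) ≤ r}.Finite := by
  refine (hX ((⌈r⌉ : ℚ) + 1)).subset ?_
  rintro q ⟨hq, hqr⟩
  refine ⟨hq, ?_⟩
  have h1 : (q : ℝ) ≤ (⌈r⌉ : ℝ) := hqr.trans (Int.le_ceil r)
  have : (q : ℝ) < ((⌈r⌉ : ℚ) : ℝ) + 1 := by push_cast at h1 ⊢; linarith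
  exact_mod_cast this

lemma wnorm_nonneg (x : LCF) (r : ℝ) : 0 ≤ wnorm x r :=
  Real.sSup_nonneg (by rintro y ⟨q, _, rfl⟩; exact norm_nonneg _)

lemma le_wnorm {x : LCF} {r : ℝ} {q : ℚ} (hq : (q : ℝ) ≤ r) : ‖coeff x q‖ ≤ wnorm x r := by
  by_cases hne : coeff x q = 0
  · rw [hne, norm_zero]; exact wnorm_nonneg x r
  · exact le_csSup ((setFinite x r).image _).bddAbove ⟨q, ⟨hq, hne⟩, rfl⟩

lemma wnorm_le {x : LCF} {r c : ℝ} (hc : 0 ≤ c)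
    (h : ∀ q : ℚ, (q : ℝ) ≤ r → coeff x q ≠ 0 → ‖coeff x q‖ ≤ c) : wnorm x r ≤ c :=
  Real.sSup_le (by rintro y ⟨q, ⟨hq, hne⟩, rfl⟩; exact h q hq hne) hc

lemma wnorm_add_le (x y : LCF) (r : ℝ) : wnorm (x + y) r ≤ wnorm x r + wnorm y r := by
  refine wnorm_le (add_nonneg (wnorm_nonneg x r) (wnorm_nonneg y r)) fun q hq _ => ?_
  rw [coeff_add]
  exact (norm_add_le _ _).trans (add_le_add (le_wnorm hq) (le_wnorm hq))

lemma wnorm_mono (x : LCF) {r r' : ℝ} (h : r ≤ r') : wnorm x r ≤ wnorm x r' :=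
  wnorm_le (wnorm_nonneg x r') fun q hq _ => le_wnorm (hq.trans h)

lemma wnorm_sub_comm (x y : LCF) (r : ℝ) : wnorm (x - y) r = wnorm (y - x) r := by
  have key : ∀ u v : LCF, wnorm (u - v) r ≤ wnorm (v - u) r := by
    intro u v
    refine wnorm_le (wnorm_nonneg _ _) fun q hq _ => ?_
    have h : coeff (u - v) q = -(coeff (v - u) q) := by rw [coeff_sub, coeff_sub]; ring
    rw [h, norm_neg]
    exact le_wnorm hq
  exact le_antisymm (key x y) (key y x)

lemma supp_mul_subset (x y : LCF) : supp (x * y) ⊆ supp x + supp y := by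
  have : supp (x * y) = ((x : HahnSeries ℚ ℝ) * (y : HahnSeries ℚ ℝ)).support := by
    show ((x * y : LCF) : HahnSeries ℚ ℝ).support = _
    rw [coe_mul]
  rw [this]
  exact HahnSeries.support_mul_subset

lemma supp_sub_subset (x y : LCF) : supp (x - y) ⊆ supp x ∪ supp y := by
  intro q hq
  rw [mem_supp, coeff_sub] at hq
  by_contra h
  rw [Set.mem_union] at h
  push_neg at h
  have h1 : coeff x q = 0 := by by_contra h1; exact h.1 h1
  have h2 : coeff y q = 0 := by by_contra h2; exact h.2 h2
  rw [h1, h2, sub_zero] at hq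
  exact hq rfl

/-- Product norm estimate. -/
lemma wnorm_mul_le (x y : LCF) {X Y : Set ℚ}
    (hx : supp x ⊆ X) (hy : supp y ⊆ Y) (hX0 : ∀ s ∈ X, 0 ≤ s) (hY0 : ∀ s ∈ Y, 0 ≤ s)
    {r : ℝ} (hXf : {q ∈ X | (q : ℝ) ≤ r}.Finite) (hYf : {q ∈ Y | (q : ℝ) ≤ r}.Finite) :
    wnorm (x * y) r ≤
      (hXf.toFinset.card : ℝ) * (hYf.toFinset.card : ℝ) * wnorm x r * wnorm y r := by
  have hwx := wnorm_nonneg x r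
  have hwy := wnorm_nonneg y r
  have hcX : (0:ℝ) ≤ (hXf.toFinset.card : ℝ) := Nat.cast_nonneg _
  have hcY : (0:ℝ) ≤ (hYf.toFinset.card : ℝ) := Nat.cast_nonneg _
  refine wnorm_le (by positivity) fun q hq _ => ?_
  have hco : coeff (x * y) q = ∑ ij ∈ Finset.antidiagonal
      (x : HahnSeries ℚ ℝ).isPWO_support (y : HahnSeries ℚ ℝ).isPWO_support q,
      (x : HahnSeries ℚ ℝ).coeff ij.1 * (y : HahnSeries ℚ ℝ).coeff ij.2 := by
    rw [coeff_def, coe_mul, HahnSeries.coeff_mul]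
  set A := Finset.antidiagonal
      (x : HahnSeries ℚ ℝ).isPWO_support (y : HahnSeries ℚ ℝ).isPWO_support q with hA
  -- basic facts about members of A
  have hmem : ∀ ij ∈ A, ij.1 ∈ X ∧ (ij.1 : ℝ) ≤ r ∧ ij.2 ∈ Y ∧ (ij.2 : ℝ) ≤ r := by
    intro ij hij
    rw [hA, Finset.mem_antidiagonal] at hij
    obtain ⟨h1, h2, h3⟩ := hij
    have hx1 : ij.1 ∈ X := hx h1
    have hy2 : ij.2 ∈ Y := hy h2
    have h10 : (0:ℚ) ≤ ij.1 := hX0 _ hx1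
    have h20 : (0:ℚ) ≤ ij.2 := hY0 _ hy2
    have e1 : ij.1 ≤ q := by linarith [h3.le]
    have e2 : ij.2 ≤ q := by linarith [h3.le]
    exact ⟨hx1, le_trans (by exact_mod_cast e1) hq, hy2, le_trans (by exact_mod_cast e2) hq⟩
  have hterm : ∀ ij ∈ A, ‖(x : HahnSeries ℚ ℝ).coeff ij.1 * (y : HahnSeries ℚ ℝ).coeff ij.2‖
      ≤ wnorm x r * wnorm y r := by
    intro ij hij
    obtain ⟨_, h1r, _, h2r⟩ := hmem ij hij
    rw [norm_mul]
    exact mul_le_mul (le_wnorm h1r) (le_wnorm h2r) (norm_nonneg _) hwx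
  have hcard : (A.card : ℝ) ≤ (hXf.toFinset.card : ℝ) * (hYf.toFinset.card : ℝ) := by
    have : A ⊆ hXf.toFinset ×ˢ hYf.toFinset := by
      intro ij hij
      obtain ⟨h1, h1r, h2, h2r⟩ := hmem ij hij
      rw [Finset.mem_product, Set.Finite.mem_toFinset, Set.Finite.mem_toFinset]
      exact ⟨⟨h1, h1r⟩, ⟨h2, h2r⟩⟩
    have := Finset.card_le_card this
    rw [Finset.card_product] at this
    exact_mod_cast this
  calc ‖coeff (x * y) q‖ ≤ ∑ ij ∈ A, ‖(x : HahnSeries ℚ ℝ).coeff ij.1 *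
        (y : HahnSeries ℚ ℝ).coeff ij.2‖ := by
        rw [hco]; exact Finset.abs_sum_le_sum_abs _ _
    _ ≤ A.card • (wnorm x r * wnorm y r) := Finset.sum_le_card_nsmul _ _ _ hterm
    _ = (A.card : ℝ) * (wnorm x r * wnorm y r) := by rw [nsmul_eq_mul]
    _ ≤ (hXf.toFinset.card : ℝ) * (hYf.toFinset.card : ℝ) * (wnorm x r * wnorm y r) :=
        mul_le_mul_of_nonneg_right hcard (by positivity)
    _ = (hXf.toFinset.card : ℝ) * (hYf.toFinset.card : ℝ) * wnorm x r * wnorm y r := by ring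

/-! ### Iterated sumsets -/

def iterSum (S : Set ℚ) : ℕ → Set ℚ
  | 0 => {0}
  | n + 1 => insert 0 S + iterSum S n

lemma zero_mem_iterSum (S : Set ℚ) : ∀ n, (0 : ℚ) ∈ iterSum S n
  | 0 => rfl
  | n + 1 => by
    rw [iterSum]
    have := Set.add_mem_add (Set.mem_insert (0:ℚ) S) (zero_mem_iterSum S n)
    simpa using this

lemma iterSum_nonneg {S : Set ℚ} (hS : ∀ s ∈ S, 0 ≤ s) :
    ∀ n, ∀ x ∈ iterSum S n, 0 ≤ x
  | 0 => by rintro x rfl; exact le_refl 0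
  | n + 1 => by
    rintro x hx
    rw [iterSum, Set.mem_add] at hx
    obtain ⟨s, hs, t, ht, rfl⟩ := hx
    have hs0 : 0 ≤ s := by
      rcases hs with rfl | hs
      · exact le_refl 0
      · exact hS s hs
    exact add_nonneg hs0 (iterSum_nonneg hS n t ht)

lemma iterSum_leftFinite {S : Set ℚ} (hS : LeftFinite S) (n : ℕ) :
    LeftFinite (iterSum S n) := by
  induction n with
  | zero => exact Set.Finite.leftFinite (Set.finite_singleton 0)
  | succ n ih =>
    exact LeftFinite.addSet
      (LeftFinite.mono (LeftFinite.union (Set.Finite.leftFinite (Set.finite_singleton 0)) hS)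
        (by rw [Set.insert_eq])) ih

lemma iterSum_shrink {S : Set ℚ} {q₀ : ℚ} (hq₀ : 0 < q₀) (hS : ∀ s ∈ S, q₀ ≤ s)
    (hS0 : ∀ s ∈ S, 0 ≤ s) :
    ∀ n N : ℕ, ∀ q ∈ iterSum S n, q < N * q₀ → q ∈ iterSum S N := by
  intro n
  induction n with
  | zero =>
    rintro N q rfl _
    exact zero_mem_iterSum S N
  | succ n ih =>
    intro N q hq hlt
    rw [iterSum, Set.mem_add] at hq
    obtain ⟨s, hs, t, ht, rfl⟩ := hq
    have ht0 : 0 ≤ t := iterSum_nonneg hS0 n t ht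
    rcases hs with rfl | hs
    · rw [zero_add] at hlt ⊢
      exact ih N t ht hlt
    · have hsq : q₀ ≤ s := hS s hs
      obtain ⟨N', rfl⟩ : ∃ N', N = N' + 1 := by
        rcases N with _ | N'
        · exfalso
          have : (0:ℚ) * q₀ = 0 := by ring
          rw [Nat.cast_zero] at hlt
          nlinarith
        · exact ⟨N', rfl⟩
      have htN : t < N' * q₀ := by
        have : (N' + 1 : ℚ) * q₀ = N' * q₀ + q₀ := by ring
        push_cast at hlt
        nlinarith
      exact Set.add_mem_add (Set.mem_insert_of_mem 0 hs) (ih N' t ht htN)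

lemma iterSum_iUnion_leftFinite {S : Set ℚ} {q₀ : ℚ} (hq₀ : 0 < q₀)
    (hS : ∀ s ∈ S, q₀ ≤ s) (hSlf : LeftFinite S) :
    LeftFinite (⋃ n, iterSum S n) := by
  have hS0 : ∀ s ∈ S, 0 ≤ s := fun s hs => le_trans hq₀.le (hS s hs)
  intro r
  obtain ⟨N, hN⟩ := exists_nat_ge (r / q₀)
  have hrN : r ≤ N * q₀ := by
    rw [div_le_iff₀ hq₀] at hN
    exact hN
  refine ((iterSum_leftFinite hSlf N) r).subset ?_
  rintro q ⟨hq, hqr⟩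
  rw [Set.mem_iUnion] at hq
  obtain ⟨n, hn⟩ := hq
  exact ⟨iterSum_shrink hq₀ hS hS0 n N q hn (lt_of_lt_of_le hqr hrN), hqr⟩

/-! ### Support of the inverse -/

lemma supp_inv_subset {x y : LCF} (hxy : x * y = 1) {S : Set ℚ} {q₀ : ℚ}
    (hq₀ : 0 < q₀) (hS : ∀ s ∈ S, q₀ ≤ s) (hsupp : supp x ⊆ insert 0 S)
    (hx0 : coeff x 0 ≠ 0) :
    supp y ⊆ ⋃ n, iterSum S n := by
  set X : HahnSeries ℚ ℝ := (x : HahnSeries ℚ ℝ) with hX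
  set Y : HahnSeries ℚ ℝ := (y : HahnSeries ℚ ℝ) with hY
  have hXY : X * Y = 1 := by rw [hX, hY, ← coe_mul, hxy, coe_one]
  have hXne : X ≠ 0 := fun h => hx0 (by rw [coeff_def, ← hX, h, HahnSeries.coeff_zero])
  have hYne : Y ≠ 0 := by
    intro h
    rw [h, mul_zero] at hXY
    exact one_ne_zero hXY.symm
  have hsupp0 : ∀ s ∈ X.support, 0 ≤ s := by
    intro s hs
    rcases hsupp hs with rfl | hs'
    · exact le_refl 0
    · exact le_trans hq₀.le (hS s hs')
  have hXord : X.order = 0 := by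
    apply le_antisymm
    · exact HahnSeries.order_le_of_coeff_ne_zero hx0
    · exact hsupp0 _ (mt HahnSeries.coeff_order_eq_zero.1 hXne)
  have hYord : Y.order = 0 := by
    have := HahnSeries.order_mul hXne hYne
    rw [hXY, HahnSeries.order_one, hXord, zero_add] at this
    exact this.symm
  have hYneg : ∀ q : ℚ, q < 0 → Y.coeff q = 0 := by
    intro q hq
    exact HahnSeries.coeff_eq_zero_of_lt_order (by rw [hYord]; exact hq)
  -- main induction
  have main : ∀ n : ℕ, ∀ q : ℚ, q < n * q₀ → Y.coeff q ≠ 0 → q ∈ ⋃ k, iterSum S k := by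
    intro n
    induction n with
    | zero =>
      intro q hq hne
      exfalso
      rw [Nat.cast_zero, zero_mul] at hq
      exact hne (hYneg q hq)
    | succ n ih =>
      intro q hq hne
      have hq0 : 0 ≤ q := by
        by_contra h
        push_neg at h
        exact hne (hYneg q h)
      rcases eq_or_lt_of_le hq0 with rfl | hqpos
      · exact Set.mem_iUnion.2 ⟨0, zero_mem_iterSum S 0⟩
      · -- use the convolution identity at q
        have h1q : (1 : HahnSeries ℚ ℝ).coeff q = 0 := by
          rw [HahnSeries.coeff_one, if_neg (ne_of_gt hqpos)]
        have hsum : ∑ ij ∈ Finset.antidiagonal X.isPWO_support Y.isPWO_support q,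
            X.coeff ij.1 * Y.coeff ij.2 = 0 := by
          rw [← HahnSeries.coeff_mul, hXY, h1q]
        set A := Finset.antidiagonal X.isPWO_support Y.isPWO_support q with hA
        have hmem0q : ((0 : ℚ), q) ∈ A := by
          rw [hA, Finset.mem_antidiagonal]
          exact ⟨hx0, hne, zero_add q⟩
        have hsplit : X.coeff 0 * Y.coeff q + ∑ ij ∈ A.erase (0, q),
            X.coeff ij.1 * Y.coeff ij.2 = 0 := by
          rw [← Finset.add_sum_erase A _ hmem0q] at hsum
          exact hsum
        have hrest : ∑ ij ∈ A.erase (0, q), X.coeff ij.1 * Y.coeff ij.2 ≠ 0 := by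
          intro h
          rw [h, add_zero] at hsplit
          exact mul_ne_zero hx0 hne hsplit
        obtain ⟨ij, hijA, hijne⟩ := Finset.exists_ne_zero_of_sum_ne_zero hrest
        have hij' := Finset.mem_of_mem_erase hijA
        rw [hA, Finset.mem_antidiagonal] at hij'
        obtain ⟨hijX, hijY, hijsum⟩ := hij'
        have hijne0 : ij.1 ≠ 0 := by
          intro h
          apply Finset.ne_of_mem_erase hijA
          have : ij.2 = q := by rw [← hijsum, h, zero_add]
          rw [← h, ← this]
        have hij1S : ij.1 ∈ S := by
          rcases hsupp hijX with h | h
          · exact absurd h hijne0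
          · exact h
        have hij1q : q₀ ≤ ij.1 := hS _ hij1S
        have hij2lt : ij.2 < n * q₀ := by
          have : ij.2 = q - ij.1 := by linarith [hijsum]
          push_cast at hq
          nlinarith
        have hYij2 : Y.coeff ij.2 ≠ 0 := fun h => hijne (by rw [h, mul_zero])
        have := ih ij.2 hij2lt hYij2
        rw [Set.mem_iUnion] at this
        obtain ⟨k, hk⟩ := this
        refine Set.mem_iUnion.2 ⟨k + 1, ?_⟩
        rw [← hijsum]
        exact Set.add_mem_add (Set.mem_insert_of_mem 0 hij1S) hk
  intro q hq
  have hne : Y.coeff q ≠ 0 := hq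
  obtain ⟨n, hn⟩ := exists_nat_gt (q / q₀)
  have : q < n * q₀ := by
    rw [div_lt_iff₀ hq₀] at hn
    exact hn
  exact main n q this hne

end LCFAux


set_option maxHeartbeats 2000000 in
/-- continuity of weak convergence with respect to taking inverses
for regular, at most finite sequences with `a[0] ≠ 0`. -/
theorem weakTendsto_inv (a b : ℕ → LeviCivitaField ℝ) (l m : LeviCivitaField ℝ)
    (hreg : Regular a) (hafin : ∀ k, AtMostFinite (a k)) (hlfin : AtMostFinite l)
    (hconv : WeakTendsto a l) (hl0 : coeff l 0 ≠ 0)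
    (hinv : ∀ k, a k * b k = 1) (hlm : l * m = 1) :
    Regular b ∧ WeakTendsto b m := by
  -- Step 1: eventually `a k` has a nonzero constant coefficient.
  have hl0n : (0:ℝ) < ‖coeff l 0‖ := norm_pos_iff.2 hl0
  obtain ⟨N₀, hN₀⟩ := hconv ‖coeff l 0‖ hl0n
  have ha0 : ∀ k, k > N₀ → coeff (a k) 0 ≠ 0 := by
    intro k hk h0
    have h1 : ‖coeff (a k - l) 0‖ ≤ wnorm (a k - l) (1 / ‖coeff l 0‖) :=
      LCFAux.le_wnorm (by push_cast; positivity)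
    rw [LCFAux.coeff_sub, h0, zero_sub, norm_neg] at h1
    exact absurd (lt_of_le_of_lt h1 (hN₀ k hk)) (lt_irrefl _)
  -- Step 2: the master support sets.
  set W : Set ℚ := (⋃ k, supp (a k)) ∪ supp l with hWdef
  have hW : LeftFinite W := LeftFinite.union hreg (leftFinite_supp l)
  have hWa : ∀ k, supp (a k) ⊆ W := fun k q hq => Or.inl (Set.mem_iUnion.2 ⟨k, hq⟩)
  have hWl : supp l ⊆ W := fun q hq => Or.inr hq
  have hW0 : ∀ q ∈ W, 0 ≤ q := by
    rintro q (hq | hq)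
    · rw [Set.mem_iUnion] at hq
      obtain ⟨k, hk⟩ := hq
      by_contra h
      push_neg at h
      exact hk (hafin k q h)
    · by_contra h
      push_neg at h
      exact hq (hlfin q h)
  set S : Set ℚ := {q ∈ W | 0 < q} with hSdef
  have hSlf : LeftFinite S := hW.mono fun q hq => hq.1
  have hS0 : ∀ s ∈ S, 0 ≤ s := fun s hs => le_of_lt hs.2
  -- a positive lower bound for S
  obtain ⟨q₀, hq₀pos, hq₀le⟩ : ∃ q₀ : ℚ, 0 < q₀ ∧ ∀ s ∈ S, q₀ ≤ s := by
    have hfin : {q ∈ S | q < 1}.Finite := hSlf 1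
    rcases Set.eq_empty_or_nonempty {q ∈ S | q < 1} with he | hne
    · refine ⟨1, one_pos, fun s hs => ?_⟩
      by_contra h
      push_neg at h
      have : s ∈ {q ∈ S | q < 1} := ⟨hs, h⟩
      rw [he] at this
      exact this
    · have hFne : hfin.toFinset.Nonempty := by
        rwa [Set.Finite.toFinset_nonempty]
      set q₀ := hfin.toFinset.min' hFne with hq₀def
      have hq₀mem : q₀ ∈ {q ∈ S | q < 1} := by
        rw [← Set.Finite.mem_toFinset hfin]
        exact hfin.toFinset.min'_mem hFne
      refine ⟨q₀, hq₀mem.1.2, fun s hs => ?_⟩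
      rcases lt_or_ge s 1 with h | h
      · exact hfin.toFinset.min'_le s (by rw [Set.Finite.mem_toFinset]; exact ⟨hs, h⟩)
      · exact le_trans (le_of_lt hq₀mem.2) h
  have hinsert : ∀ x : LeviCivitaField ℝ, supp x ⊆ W → supp x ⊆ insert 0 S := by
    intro x hx q hq
    rcases eq_or_lt_of_le (hW0 q (hx hq)) with h | h
    · exact Or.inl h.symm
    · exact Or.inr ⟨hx hq, h⟩
  set U : Set ℚ := ⋃ n, LCFAux.iterSum S n with hUdef
  have hU : LeftFinite U := LCFAux.iterSum_iUnion_leftFinite hq₀pos hq₀le hSlf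
  have hU0 : ∀ q ∈ U, 0 ≤ q := by
    intro q hq
    rw [hUdef, Set.mem_iUnion] at hq
    obtain ⟨n, hn⟩ := hq
    exact LCFAux.iterSum_nonneg hS0 n q hn
  have hm_supp : supp m ⊆ U :=
    LCFAux.supp_inv_subset hlm hq₀pos hq₀le (hinsert l hWl) hl0
  have hb_supp : ∀ k, k > N₀ → supp (b k) ⊆ U := fun k hk =>
    LCFAux.supp_inv_subset (hinv k) hq₀pos hq₀le (hinsert (a k) (hWa k)) (ha0 k hk)
  clear_value U S W
  -- Step 3: regularity of b.
  have hregb : Regular b := by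
    intro r
    refine ((hU r).union ((Set.finite_Iic N₀).biUnion
      (fun k _ => leftFinite_supp (b k) r))).subset ?_
    rintro q ⟨hq, hqr⟩
    rw [Set.mem_iUnion] at hq
    obtain ⟨k, hk⟩ := hq
    rcases le_or_gt k N₀ with h | h
    · exact Or.inr (Set.mem_biUnion h ⟨hk, hqr⟩)
    · exact Or.inl ⟨hb_supp k h hk, hqr⟩
  refine ⟨hregb, ?_⟩
  -- Step 4: weak convergence.
  intro r hr
  have hRpos : (0:ℝ) < 1 / r := by positivity
  have hUf := LCFAux.finite_le hU (1 / r)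
  have hWf := LCFAux.finite_le hW (1 / r)
  have hUUf := LCFAux.finite_le (hU.addSet hU) (1 / r)
  obtain ⟨cU, hcU0, hcUdef⟩ : ∃ c : ℝ, 0 ≤ c ∧ (hUf.toFinset.card : ℝ) = c :=
    ⟨_, Nat.cast_nonneg _, rfl⟩
  obtain ⟨cW, hcW0, hcWdef⟩ : ∃ c : ℝ, 0 ≤ c ∧ (hWf.toFinset.card : ℝ) = c :=
    ⟨_, Nat.cast_nonneg _, rfl⟩
  obtain ⟨cUU, hcUU0, hcUUdef⟩ : ∃ c : ℝ, 0 ≤ c ∧ (hUUf.toFinset.card : ℝ) = c :=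
    ⟨_, Nat.cast_nonneg _, rfl⟩
  obtain ⟨M, hM0, hMdef⟩ : ∃ c : ℝ, 0 ≤ c ∧ wnorm m (1 / r) = c :=
    ⟨_, LCFAux.wnorm_nonneg _ _, rfl⟩
  obtain ⟨K, hK0, hKdef⟩ : ∃ c : ℝ, 0 ≤ c ∧ cUU * cW * (cU * cU) * M = c :=
    ⟨_, mul_nonneg (mul_nonneg (mul_nonneg hcUU0 hcW0) (mul_nonneg hcU0 hcU0)) hM0, rfl⟩
  have hKM0 : (0:ℝ) ≤ K * M := mul_nonneg hK0 hM0
  obtain ⟨ε, hεpos, hεr, hεb1, hεb2⟩ :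
      ∃ e : ℝ, 0 < e ∧ e ≤ r ∧ e ≤ 1 / (2 * K + 1) ∧ e ≤ r / (2 * K * M + 1) := by
    refine ⟨min r (min (1 / (2 * K + 1)) (r / (2 * K * M + 1))), ?_, min_le_left _ _,
      (min_le_right _ _).trans (min_le_left _ _), (min_le_right _ _).trans (min_le_right _ _)⟩
    refine lt_min hr (lt_min (one_div_pos.2 (by linarith)) (div_pos hr (by linarith)))
  obtain ⟨N₁, hN₁⟩ := hconv ε hεpos
  refine ⟨max N₀ N₁, fun n hn => ?_⟩
  have hnN₀ : n > N₀ := lt_of_le_of_lt (le_max_left _ _) hn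
  have hnN₁ : n > N₁ := lt_of_le_of_lt (le_max_right _ _) hn
  -- the error of a n at scale 1/r is < ε
  have hεn_lt : wnorm (a n - l) (1 / r) < ε := by
    have h1 : 1 / r ≤ 1 / ε := one_div_le_one_div_of_le hεpos hεr
    exact lt_of_le_of_lt (LCFAux.wnorm_mono _ h1) (hN₁ n hnN₁)
  obtain ⟨εn, hεn0, hεndef⟩ : ∃ c : ℝ, 0 ≤ c ∧ wnorm (a n - l) (1 / r) = c :=
    ⟨_, LCFAux.wnorm_nonneg _ _, rfl⟩
  rw [hεndef] at hεn_lt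
  obtain ⟨δ, hδ0, hδdef⟩ : ∃ c : ℝ, 0 ≤ c ∧ wnorm (b n - m) (1 / r) = c :=
    ⟨_, LCFAux.wnorm_nonneg _ _, rfl⟩
  obtain ⟨B, hB0, hBdef⟩ : ∃ c : ℝ, 0 ≤ c ∧ wnorm (b n) (1 / r) = c :=
    ⟨_, LCFAux.wnorm_nonneg _ _, rfl⟩
  obtain ⟨P, hP0, hPdef⟩ : ∃ c : ℝ, 0 ≤ c ∧ wnorm (b n * m) (1 / r) = c :=
    ⟨_, LCFAux.wnorm_nonneg _ _, rfl⟩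
  -- support facts
  have hUU0 : ∀ q ∈ U + U, 0 ≤ q := by
    intro q hq
    rw [Set.mem_add] at hq
    obtain ⟨u, hu, v, hv, rfl⟩ := hq
    exact add_nonneg (hU0 u hu) (hU0 v hv)
  have hbm : supp (b n * m) ⊆ U + U :=
    (LCFAux.supp_mul_subset _ _).trans (Set.add_subset_add (hb_supp n hnN₀) hm_supp)
  have hla : supp (l - a n) ⊆ W :=
    (LCFAux.supp_sub_subset l (a n)).trans (Set.union_subset hWl (hWa n))
  -- the algebraic identity
  have heq : b n - m = b n * m * (l - a n) := by
    linear_combination m * (hinv n) - (b n) * hlm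
  -- the chain of estimates
  have h1 : δ ≤ cUU * cW * P * εn := by
    have := LCFAux.wnorm_mul_le (b n * m) (l - a n) hbm hla hUU0 hW0 hUUf hWf
    rw [← heq, hcUUdef, hcWdef, hPdef, LCFAux.wnorm_sub_comm l (a n), hεndef, hδdef] at this
    exact this
  have h2 : P ≤ cU * cU * B * M := by
    have := LCFAux.wnorm_mul_le (b n) m (hb_supp n hnN₀) hm_supp hU0 hU0 hUf hUf
    rw [hcUdef, hPdef, hMdef, hBdef] at this
    exact this
  have h3 : B ≤ M + δ := by
    have e : b n = m + (b n - m) := by ring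
    have := LCFAux.wnorm_add_le m (b n - m) (1 / r)
    rw [← e, hMdef, hδdef, hBdef] at this
    exact this
  have hδK : δ ≤ K * (M + δ) * εn := by
    have s1 : cU * cU * B * M ≤ cU * cU * (M + δ) * M := by
      nlinarith [mul_nonneg (mul_nonneg (mul_nonneg hcU0 hcU0) hM0) (sub_nonneg.2 h3)]
    have s2 : cUU * cW * P * εn ≤ cUU * cW * (cU * cU * (M + δ) * M) * εn := by
      nlinarith [mul_nonneg (mul_nonneg (mul_nonneg hcUU0 hcW0) hεn0)
        (sub_nonneg.2 (h2.trans s1))]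
    refine (h1.trans s2).trans (le_of_eq ?_)
    rw [← hKdef]
    ring
  -- numerical conclusion
  have hb1 : εn * (2 * K + 1) ≤ 1 := by
    rw [le_div_iff₀ (by linarith : (0:ℝ) < 2 * K + 1)] at hεb1
    nlinarith
  have hb2 : εn * (2 * K * M + 1) ≤ r := by
    rw [le_div_iff₀ (by linarith : (0:ℝ) < 2 * K * M + 1)] at hεb2
    nlinarith
  have e2 : δ ≤ 2 * K * M * εn := by
    nlinarith [mul_le_mul_of_nonneg_left hb1 hδ0, mul_nonneg hδ0 hεn0,
      mul_nonneg (mul_nonneg hK0 hδ0) hεn0]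
  have hfin : δ < r := by
    nlinarith [mul_le_mul_of_nonneg_left hb2 (by linarith : (0:ℝ) ≤ 2 * K * M),
      mul_nonneg hKM0 hεn0]
  rw [← hδdef] at hfin
  exact hfin
end
end

section
/- Let (a_k) be a regular sequence in ℛ whose elements are all at most finite, converging weakly to an at most finite a ∈ ℛ with a[0] ≠ 0. Suppose b_k ∈ ℛ satisfy b_k ⪰ 0 and b_k·b_k = a_k for all k, and b ∈ ℛ satisfies b ⪰ 0 and b·b = a. Then (b_k) converges weakly to b (i.e. √a_k →wk √a). -/
open Pointwise

noncomputable section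

open LeviCivitaField

section SqrtAux

open LeviCivitaField Finset

/-- Constants for the square-root recursion bound. -/
def LCAux.recSq (β E : ℝ) (N : ℕ) : ℕ → ℝ
  | 0 => max 1 E
  | j + 1 => max (LCAux.recSq β E N j) ((E + N * LCAux.recSq β E N j ^ 2) / (2 * β))

lemma LCAux.recSq_one_le (β E : ℝ) (N : ℕ) : ∀ j, 1 ≤ LCAux.recSq β E N j
  | 0 => le_max_left _ _
  | j + 1 => le_trans (LCAux.recSq_one_le β E N j) (le_max_left _ _)

lemma LCAux.recSq_mono (β E : ℝ) (N : ℕ) : Monotone (LCAux.recSq β E N) :=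
  monotone_nat_of_le_succ fun _ => le_max_left _ _

lemma LCAux.rec_bound_sq (X Z : HahnSeries ℚ ℝ) (hXX : X * X = Z) (T : Finset ℚ) (R : ℚ)
    (hR : 0 ≤ R)
    (hXs : ∀ t ∈ X.support, 0 ≤ t)
    (hXT : ∀ t ∈ X.support, t ≤ R → t ∈ T)
    (β E : ℝ) (hβ : 0 < β) (hX0 : β ≤ X.coeff 0)
    (hZE : ∀ t : ℚ, 0 ≤ t → t ≤ R → |Z.coeff t| ≤ E) :
    ∀ q : ℚ, q ≤ R → |X.coeff q| ≤ LCAux.recSq β E T.card T.card := by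
  have hE0 : 0 ≤ E := le_trans (abs_nonneg _) (hZE 0 le_rfl hR)
  have hX0pos : 0 < X.coeff 0 := lt_of_lt_of_le hβ hX0
  have h0mem : (0 : ℚ) ∈ X.support := ne_of_gt hX0pos
  have h0T : (0 : ℚ) ∈ T := hXT 0 h0mem hR
  have hZ0 : Z.coeff 0 = X.coeff 0 * X.coeff 0 := by
    rw [← hXX, HahnSeries.coeff_mul]
    rw [Finset.sum_eq_single ((0 : ℚ), (0 : ℚ))]
    · intro ij hij hne
      rw [Finset.mem_antidiagonal] at hij
      obtain ⟨h1, h2, h3⟩ := hij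
      have e1 : ij.1 = 0 := by
        have := hXs _ h1; have := hXs _ h2; linarith
      have e2 : ij.2 = 0 := by
        have := hXs _ h1; have := hXs _ h2; linarith
      exact absurd (Prod.ext e1 e2) hne
    · intro hnot
      exact absurd (Finset.mem_antidiagonal.mpr ⟨h0mem, h0mem, add_zero 0⟩) hnot
  have hx0b : |X.coeff 0| ≤ max 1 E := by
    rw [abs_of_pos hX0pos]
    rcases le_or_gt (X.coeff 0) 1 with h | h
    · exact le_trans h (le_max_left _ _)
    · refine le_trans ?_ (le_max_right _ _)
      nlinarith [hZE 0 le_rfl hR, le_abs_self (Z.coeff 0)]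
  have key : ∀ j : ℕ, ∀ q : ℚ, q ≤ R → (T.filter (· < q)).card = j →
      |X.coeff q| ≤ LCAux.recSq β E T.card j := by
    intro j
    induction j using Nat.strong_induction_on with
    | _ j ih =>
      intro q hqR hcard
      by_cases hqs : X.coeff q = 0
      · rw [hqs, abs_zero]
        exact le_trans zero_le_one (LCAux.recSq_one_le β E T.card j)
      have hqmem : q ∈ X.support := hqs
      have hq0 : 0 ≤ q := hXs q hqmem
      rcases hq0.lt_or_eq with hqpos | hqzero
      swap
      · rw [← hqzero]
        exact le_trans hx0b (LCAux.recSq_mono β E T.card (Nat.zero_le j))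
      -- q > 0, so 0 ∈ filter (< q) and j ≥ 1
      have h0f : (0 : ℚ) ∈ T.filter (· < q) := Finset.mem_filter.mpr ⟨h0T, hqpos⟩
      cases j with
      | zero =>
        exfalso
        have := Finset.card_pos.mpr ⟨(0 : ℚ), h0f⟩
        omega
      | succ j' =>
        have hmem1 : (q, (0 : ℚ)) ∈
            Finset.antidiagonal X.isPWO_support X.isPWO_support q :=
          Finset.mem_antidiagonal.mpr ⟨hqmem, h0mem, add_zero q⟩
        have hmem2 : ((0 : ℚ), q) ∈
            Finset.antidiagonal X.isPWO_support X.isPWO_support q :=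
          Finset.mem_antidiagonal.mpr ⟨h0mem, hqmem, zero_add q⟩
        have hne12 : ((0 : ℚ), q) ≠ (q, (0 : ℚ)) := by
          intro h
          exact hqpos.ne (congrArg Prod.fst h)
        have hmem2' : ((0 : ℚ), q) ∈
            (Finset.antidiagonal X.isPWO_support X.isPWO_support q).erase (q, 0) :=
          Finset.mem_erase.mpr ⟨hne12, hmem2⟩
        set Srest := ((Finset.antidiagonal X.isPWO_support X.isPWO_support q).erase
            (q, 0)).erase (0, q) with hSrest
        have hsplit : Z.coeff q = X.coeff q * X.coeff 0 +
            (X.coeff 0 * X.coeff q + ∑ ij ∈ Srest, X.coeff ij.1 * X.coeff ij.2) := by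
          rw [← hXX, HahnSeries.coeff_mul, ← Finset.add_sum_erase _ _ hmem1,
            ← Finset.add_sum_erase _ _ hmem2']
        have hfacts : ∀ ij ∈ Srest,
            ij.1 ∈ T ∧ ij.1 < q ∧ ij.2 ∈ T ∧ ij.2 < q ∧ ij.1 + ij.2 = q := by
          intro ij hij
          have hne2 := Finset.ne_of_mem_erase hij
          have hij' := Finset.mem_of_mem_erase hij
          have hne1 := Finset.ne_of_mem_erase hij'
          have hmem := Finset.mem_antidiagonal.mp (Finset.mem_of_mem_erase hij')
          obtain ⟨h1, h2, h3⟩ := hmem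
          have h1' : 0 ≤ ij.1 := hXs _ h1
          have h2' : 0 ≤ ij.2 := hXs _ h2
          have h1pos : 0 < ij.1 := by
            rcases h1'.lt_or_eq with h | h
            · exact h
            · exact absurd (Prod.ext h.symm (by linarith)) hne2
          have h2pos : 0 < ij.2 := by
            rcases h2'.lt_or_eq with h | h
            · exact h
            · exact absurd (Prod.ext (by linarith) h.symm) hne1
          have h1lt : ij.1 < q := by linarith
          have h2lt : ij.2 < q := by linarith
          exact ⟨hXT _ h1 (by linarith), h1lt, hXT _ h2 (by linarith), h2lt, h3⟩
        have hIH : ∀ t : ℚ, t ∈ T → t < q → |X.coeff t| ≤ LCAux.recSq β E T.card j' := by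
          intro t hT hlt
          have hsub : T.filter (· < t) ⊆ T.filter (· < q) := by
            intro w hw
            rw [Finset.mem_filter] at hw ⊢
            exact ⟨hw.1, lt_trans hw.2 hlt⟩
          have hmemf : t ∈ T.filter (· < q) := Finset.mem_filter.mpr ⟨hT, hlt⟩
          have hnot : t ∉ T.filter (· < t) := by simp [Finset.mem_filter]
          have hlt' : (T.filter (· < t)).card < j' + 1 := by
            rw [← hcard]
            exact Finset.card_lt_card ⟨hsub, fun hsup => hnot (hsup hmemf)⟩
          refine le_trans (ih _ hlt' t (by linarith) rfl) ?_
          exact LCAux.recSq_mono β E T.card (by omega)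
        have hterm : ∀ ij ∈ Srest,
            |X.coeff ij.1 * X.coeff ij.2| ≤ LCAux.recSq β E T.card j' ^ 2 := by
          intro ij hij
          obtain ⟨hT1, hlt1, hT2, hlt2, -⟩ := hfacts ij hij
          rw [abs_mul, sq]
          exact mul_le_mul (hIH _ hT1 hlt1) (hIH _ hT2 hlt2) (abs_nonneg _)
            (le_trans zero_le_one (LCAux.recSq_one_le β E T.card j'))
        have hcardle : Srest.card ≤ T.card := by
          apply Finset.card_le_card_of_injOn (fun ij => ij.1)
          · intro ij hij
            exact (hfacts ij hij).1
          · intro ij hij ij' hij' hEq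
            simp only [Finset.mem_coe] at hij hij'
            have h3 := (hfacts ij hij).2.2.2.2
            have h3' := (hfacts ij' hij').2.2.2.2
            simp only at hEq
            refine Prod.ext hEq ?_
            rw [hEq] at h3
            linarith
        have hsum_bound : |∑ ij ∈ Srest, X.coeff ij.1 * X.coeff ij.2|
            ≤ (T.card : ℝ) * LCAux.recSq β E T.card j' ^ 2 := by
          have hb0 : (0 : ℝ) ≤ LCAux.recSq β E T.card j' ^ 2 := sq_nonneg _
          calc |∑ ij ∈ Srest, X.coeff ij.1 * X.coeff ij.2|
              ≤ ∑ ij ∈ Srest, |X.coeff ij.1 * X.coeff ij.2| := Finset.abs_sum_le_sum_abs _ _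
            _ ≤ Srest.card • LCAux.recSq β E T.card j' ^ 2 :=
                Finset.sum_le_card_nsmul _ _ _ hterm
            _ = (Srest.card : ℝ) * LCAux.recSq β E T.card j' ^ 2 := nsmul_eq_mul _ _
            _ ≤ (T.card : ℝ) * LCAux.recSq β E T.card j' ^ 2 := by
                apply mul_le_mul_of_nonneg_right _ hb0
                exact_mod_cast hcardle
        have hxqb : |X.coeff q| * (2 * β)
            ≤ E + (T.card : ℝ) * LCAux.recSq β E T.card j' ^ 2 := by
          calc |X.coeff q| * (2 * β) ≤ |X.coeff q| * (2 * X.coeff 0) := by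
                apply mul_le_mul_of_nonneg_left _ (abs_nonneg _)
                linarith
            _ = |X.coeff q * X.coeff 0 + X.coeff 0 * X.coeff q| := by
                have h : X.coeff q * X.coeff 0 + X.coeff 0 * X.coeff q
                    = (2 * X.coeff 0) * X.coeff q := by ring
                rw [h, abs_mul, abs_of_pos (by linarith : (0:ℝ) < 2 * X.coeff 0)]
                ring
            _ = |Z.coeff q - ∑ ij ∈ Srest, X.coeff ij.1 * X.coeff ij.2| := by
                rw [hsplit]; ring_nf
            _ ≤ |Z.coeff q| + |∑ ij ∈ Srest, X.coeff ij.1 * X.coeff ij.2| := abs_sub _ _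
            _ ≤ E + (T.card : ℝ) * LCAux.recSq β E T.card j' ^ 2 :=
                add_le_add (hZE q hq0 hqR) hsum_bound
        calc |X.coeff q|
            ≤ (E + (T.card : ℝ) * LCAux.recSq β E T.card j' ^ 2) / (2 * β) :=
              (le_div_iff₀ (by linarith)).mpr hxqb
          _ ≤ LCAux.recSq β E T.card (j' + 1) := le_max_right _ _
  intro q hqR
  refine le_trans (key _ q hqR rfl) ?_
  exact LCAux.recSq_mono β E T.card (Finset.card_le_card (Finset.filter_subset _ _))

/-- Constants for the division recursion bound. -/
def LCAux.recK (β V : ℝ) (N : ℕ) : ℕ → ℝ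
  | 0 => max 1 (1 / β)
  | j + 1 => max (LCAux.recK β V N j) ((1 + N * V * LCAux.recK β V N j) / β)

lemma LCAux.recK_one_le (β V : ℝ) (N : ℕ) : ∀ j, 1 ≤ LCAux.recK β V N j
  | 0 => le_max_left _ _
  | j + 1 => le_trans (LCAux.recK_one_le β V N j) (le_max_left _ _)

lemma LCAux.recK_mono (β V : ℝ) (N : ℕ) : Monotone (LCAux.recK β V N) :=
  monotone_nat_of_le_succ fun _ => le_max_left _ _

lemma LCAux.rec_bound (X Y Z : HahnSeries ℚ ℝ) (hXY : X * Y = Z) (T : Finset ℚ) (R : ℚ)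
    (hR : 0 ≤ R)
    (hXs : ∀ t ∈ X.support, 0 ≤ t)
    (hYs : ∀ t ∈ Y.support, 0 ≤ t)
    (hXT : ∀ t ∈ X.support, t ≤ R → t ∈ T)
    (β V E : ℝ) (hβ : 0 < β) (hY0 : β ≤ Y.coeff 0)
    (hYV : ∀ t : ℚ, 0 ≤ t → t ≤ R → |Y.coeff t| ≤ V)
    (hZE : ∀ t : ℚ, 0 ≤ t → t ≤ R → |Z.coeff t| ≤ E) :
    ∀ q : ℚ, q ≤ R → |X.coeff q| ≤ E * LCAux.recK β V T.card T.card := by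
  have hE0 : 0 ≤ E := le_trans (abs_nonneg _) (hZE 0 le_rfl hR)
  have hV0 : 0 ≤ V := le_trans (abs_nonneg _) (hYV 0 le_rfl hR)
  have hY0pos : 0 < Y.coeff 0 := lt_of_lt_of_le hβ hY0
  have hY0mem : (0 : ℚ) ∈ Y.support := ne_of_gt hY0pos
  have key : ∀ j : ℕ, ∀ q : ℚ, q ≤ R → (T.filter (· < q)).card = j →
      |X.coeff q| ≤ E * LCAux.recK β V T.card j := by
    intro j
    induction j using Nat.strong_induction_on with
    | _ j ih =>
      intro q hqR hcard
      by_cases hqs : X.coeff q = 0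
      · rw [hqs, abs_zero]
        exact mul_nonneg hE0 (le_trans zero_le_one (LCAux.recK_one_le β V T.card j))
      have hqmem : q ∈ X.support := hqs
      have hq0 : 0 ≤ q := hXs q hqmem
      have hmemq : (q, (0 : ℚ)) ∈
          Finset.antidiagonal X.isPWO_support Y.isPWO_support q :=
        Finset.mem_antidiagonal.mpr ⟨hqmem, hY0mem, add_zero q⟩
      have hsplit : Z.coeff q = X.coeff q * Y.coeff 0 +
          ∑ ij ∈ (Finset.antidiagonal X.isPWO_support Y.isPWO_support q).erase (q, 0),
            X.coeff ij.1 * Y.coeff ij.2 := by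
        rw [← hXY, HahnSeries.coeff_mul, ← Finset.add_sum_erase _ _ hmemq]
      have hfacts : ∀ ij ∈
          (Finset.antidiagonal X.isPWO_support Y.isPWO_support q).erase (q, 0),
          ij.1 ∈ T ∧ ij.1 < q ∧ 0 ≤ ij.2 ∧ ij.2 ≤ R := by
        intro ij hij
        have hne := Finset.ne_of_mem_erase hij
        have hmem := Finset.mem_antidiagonal.mp (Finset.mem_of_mem_erase hij)
        obtain ⟨h1, h2, h3⟩ := hmem
        have h1' : 0 ≤ ij.1 := hXs _ h1
        have h2' : 0 ≤ ij.2 := hYs _ h2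
        have h2pos : 0 < ij.2 := by
          rcases h2'.lt_or_eq with h | h
          · exact h
          · exact absurd (Prod.ext (by linarith) h.symm) hne
        have h1lt : ij.1 < q := by linarith
        exact ⟨hXT _ h1 (le_trans h1lt.le hqR), h1lt, h2', by linarith⟩
      cases j with
      | zero =>
        have hrest : ∑ ij ∈
            (Finset.antidiagonal X.isPWO_support Y.isPWO_support q).erase (q, 0),
            X.coeff ij.1 * Y.coeff ij.2 = 0 := by
          apply Finset.sum_eq_zero
          intro ij hij
          obtain ⟨hT, hlt, -, -⟩ := hfacts ij hij
          exfalso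
          have hmf : ij.1 ∈ T.filter (· < q) := Finset.mem_filter.mpr ⟨hT, hlt⟩
          have := Finset.card_pos.mpr ⟨ij.1, hmf⟩
          omega
        rw [hrest, add_zero] at hsplit
        have h1 : |X.coeff q| * β ≤ E := by
          calc |X.coeff q| * β ≤ |X.coeff q| * Y.coeff 0 :=
                mul_le_mul_of_nonneg_left hY0 (abs_nonneg _)
            _ = |X.coeff q * Y.coeff 0| := by rw [abs_mul, abs_of_pos hY0pos]
            _ = |Z.coeff q| := by rw [hsplit]
            _ ≤ E := hZE q hq0 hqR
        calc |X.coeff q| ≤ E / β := (le_div_iff₀ hβ).mpr h1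
          _ = E * (1 / β) := by ring
          _ ≤ E * LCAux.recK β V T.card 0 :=
              mul_le_mul_of_nonneg_left (le_max_right _ _) hE0
      | succ j' =>
        have hterm : ∀ ij ∈
            (Finset.antidiagonal X.isPWO_support Y.isPWO_support q).erase (q, 0),
            |X.coeff ij.1 * Y.coeff ij.2| ≤ E * LCAux.recK β V T.card j' * V := by
          intro ij hij
          obtain ⟨hT, hlt, h2nn, h2le⟩ := hfacts ij hij
          have hsub : T.filter (· < ij.1) ⊆ T.filter (· < q) := by
            intro t ht
            rw [Finset.mem_filter] at ht ⊢
            exact ⟨ht.1, lt_trans ht.2 hlt⟩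
          have hmemf : ij.1 ∈ T.filter (· < q) := Finset.mem_filter.mpr ⟨hT, hlt⟩
          have hnot : ij.1 ∉ T.filter (· < ij.1) := by simp [Finset.mem_filter]
          have hlt' : (T.filter (· < ij.1)).card < j' + 1 := by
            rw [← hcard]
            exact Finset.card_lt_card ⟨hsub, fun hsup => hnot (hsup hmemf)⟩
          have hIH : |X.coeff ij.1| ≤ E * LCAux.recK β V T.card j' := by
            refine le_trans (ih _ hlt' ij.1 (le_trans hlt.le hqR) rfl) ?_
            refine mul_le_mul_of_nonneg_left (LCAux.recK_mono β V T.card ?_) hE0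
            omega
          calc |X.coeff ij.1 * Y.coeff ij.2| = |X.coeff ij.1| * |Y.coeff ij.2| := abs_mul _ _
            _ ≤ E * LCAux.recK β V T.card j' * V := by
                apply mul_le_mul hIH (hYV ij.2 h2nn h2le) (abs_nonneg _)
                exact mul_nonneg hE0 (le_trans zero_le_one (LCAux.recK_one_le β V T.card j'))
        have hcardle :
            ((Finset.antidiagonal X.isPWO_support Y.isPWO_support q).erase (q, 0)).card
              ≤ T.card := by
          apply Finset.card_le_card_of_injOn (fun ij => ij.1)
          · intro ij hij
            exact (hfacts ij hij).1
          · intro ij hij ij' hij' hEq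
            simp only [Finset.mem_coe] at hij hij'
            have h3 := (Finset.mem_antidiagonal.mp (Finset.mem_of_mem_erase hij)).2.2
            have h3' := (Finset.mem_antidiagonal.mp (Finset.mem_of_mem_erase hij')).2.2
            simp only at hEq
            refine Prod.ext hEq ?_
            rw [hEq] at h3
            linarith
        have hsum_bound : |∑ ij ∈
            (Finset.antidiagonal X.isPWO_support Y.isPWO_support q).erase (q, 0),
            X.coeff ij.1 * Y.coeff ij.2|
              ≤ (T.card : ℝ) * (E * LCAux.recK β V T.card j' * V) := by
          have hb0 : (0:ℝ) ≤ E * LCAux.recK β V T.card j' * V :=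
            mul_nonneg (mul_nonneg hE0
              (le_trans zero_le_one (LCAux.recK_one_le β V T.card j'))) hV0
          calc |∑ ij ∈
              (Finset.antidiagonal X.isPWO_support Y.isPWO_support q).erase (q, 0),
              X.coeff ij.1 * Y.coeff ij.2|
              ≤ ∑ ij ∈
                (Finset.antidiagonal X.isPWO_support Y.isPWO_support q).erase (q, 0),
                |X.coeff ij.1 * Y.coeff ij.2| := Finset.abs_sum_le_sum_abs _ _
            _ ≤ ((Finset.antidiagonal X.isPWO_support Y.isPWO_support q).erase (q, 0)).card
                • (E * LCAux.recK β V T.card j' * V) := Finset.sum_le_card_nsmul _ _ _ hterm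
            _ = (((Finset.antidiagonal X.isPWO_support Y.isPWO_support q).erase
                (q, 0)).card : ℝ) * (E * LCAux.recK β V T.card j' * V) := nsmul_eq_mul _ _
            _ ≤ (T.card : ℝ) * (E * LCAux.recK β V T.card j' * V) := by
                apply mul_le_mul_of_nonneg_right _ hb0
                exact_mod_cast hcardle
        have hxqb : |X.coeff q| * β ≤ E + (T.card : ℝ) * (E * LCAux.recK β V T.card j' * V) := by
          calc |X.coeff q| * β ≤ |X.coeff q| * Y.coeff 0 :=
                mul_le_mul_of_nonneg_left hY0 (abs_nonneg _)
            _ = |X.coeff q * Y.coeff 0| := by rw [abs_mul, abs_of_pos hY0pos]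
            _ = |Z.coeff q - ∑ ij ∈
                (Finset.antidiagonal X.isPWO_support Y.isPWO_support q).erase (q, 0),
                X.coeff ij.1 * Y.coeff ij.2| := by rw [hsplit]; ring_nf
            _ ≤ |Z.coeff q| + |∑ ij ∈
                (Finset.antidiagonal X.isPWO_support Y.isPWO_support q).erase (q, 0),
                X.coeff ij.1 * Y.coeff ij.2| := abs_sub _ _
            _ ≤ E + (T.card : ℝ) * (E * LCAux.recK β V T.card j' * V) :=
                add_le_add (hZE q hq0 hqR) hsum_bound
        calc |X.coeff q|
            ≤ (E + (T.card : ℝ) * (E * LCAux.recK β V T.card j' * V)) / β :=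
              (le_div_iff₀ hβ).mpr hxqb
          _ = E * ((1 + (T.card : ℝ) * V * LCAux.recK β V T.card j') / β) := by ring
          _ ≤ E * LCAux.recK β V T.card (j' + 1) :=
              mul_le_mul_of_nonneg_left (le_max_right _ _) hE0
  intro q hqR
  refine le_trans (key _ q hqR rfl) ?_
  exact mul_le_mul_of_nonneg_left
    (LCAux.recK_mono β V T.card (Finset.card_le_card (Finset.filter_subset _ _))) hE0

/-- Sums of at most `n` elements of `F`. -/
def LCAux.sumsUpTo (F : Finset ℚ) : ℕ → Finset ℚ
  | 0 => {0}
  | n + 1 => LCAux.sumsUpTo F n ∪ (F + LCAux.sumsUpTo F n)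

lemma LCAux.sum_mem_sumsUpTo (F : Finset ℚ) :
    ∀ (n : ℕ) (M : Multiset ℚ), M.card ≤ n → (∀ p ∈ M, p ∈ F) →
      M.sum ∈ LCAux.sumsUpTo F n := by
  have hzero : ∀ n : ℕ, (0 : ℚ) ∈ LCAux.sumsUpTo F n := by
    intro n
    induction n with
    | zero => simp [LCAux.sumsUpTo]
    | succ n ih => simp only [LCAux.sumsUpTo, Finset.mem_union]; exact Or.inl ih
  intro n
  induction n with
  | zero =>
    intro M hc _
    rw [Multiset.card_eq_zero.mp (Nat.le_zero.mp hc)]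
    simpa using hzero 0
  | succ n ih =>
    intro M hc hmem
    rcases M.empty_or_exists_mem with rfl | ⟨p, hp⟩
    · simpa using hzero (n + 1)
    · have hM : M = p ::ₘ M.erase p := (Multiset.cons_erase hp).symm
      have hcard : (M.erase p).card ≤ n := by
        have h1 := Multiset.card_erase_of_mem hp
        rw [Nat.pred_eq_sub_one] at h1
        have h2 : 1 ≤ M.card := by
          rw [hM, Multiset.card_cons]; omega
        omega
      have h1 : (M.erase p).sum ∈ LCAux.sumsUpTo F n :=
        ih _ hcard (fun t ht => hmem t (Multiset.mem_of_mem_erase ht))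
      rw [hM, Multiset.sum_cons]
      simp only [LCAux.sumsUpTo, Finset.mem_union]
      exact Or.inr (Finset.add_mem_add (hmem p hp) h1)

lemma LCAux.leftFinite_closure {P : Set ℚ} (hP : LeftFinite P) (hpos : ∀ p ∈ P, 0 < p) :
    LeftFinite ((AddSubmonoid.closure P : AddSubmonoid ℚ) : Set ℚ) := by
  obtain ⟨δ, hδ0, hδ⟩ : ∃ δ : ℚ, 0 < δ ∧ ∀ p ∈ P, δ ≤ p := by
    rcases Set.eq_empty_or_nonempty {q ∈ P | q < 1} with he | hne
    · refine ⟨1, one_pos, fun p hp => ?_⟩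
      by_contra hlt
      push_neg at hlt
      exact Set.eq_empty_iff_forall_notMem.mp he p ⟨hp, hlt⟩
    · have hne' : (hP 1).toFinset.Nonempty := by
        rwa [Set.Finite.toFinset_nonempty]
      refine ⟨min ((hP 1).toFinset.min' hne') 1, ?_, ?_⟩
      · have hmem := (hP 1).toFinset.min'_mem hne'
        rw [Set.Finite.mem_toFinset] at hmem
        exact lt_min (hpos _ hmem.1) one_pos
      · intro p hp
        rcases lt_or_ge p 1 with h1 | h1
        · exact le_trans (min_le_left _ _)
            ((hP 1).toFinset.min'_le p (by rw [Set.Finite.mem_toFinset]; exact ⟨hp, h1⟩))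
        · exact le_trans (min_le_right _ _) h1
  intro r
  set F := (hP r).toFinset with hF
  set n := ⌈r / δ⌉₊ with hn
  apply (LCAux.sumsUpTo F n).finite_toSet.subset
  rintro g ⟨hg, hgr⟩
  obtain ⟨M, hmem, rfl⟩ := AddSubmonoid.exists_multiset_of_mem_closure hg
  have hmemF : ∀ p ∈ M, p ∈ F := by
    intro p hp
    have hle : p ≤ M.sum :=
      Multiset.single_le_sum (fun x hx => le_of_lt (hpos x (hmem x hx))) p hp
    rw [hF, Set.Finite.mem_toFinset]
    exact ⟨hmem p hp, lt_of_le_of_lt hle hgr⟩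
  have hcard : (M.card : ℚ) ≤ (n : ℚ) := by
    have h1 : M.card • δ ≤ M.sum := Multiset.card_nsmul_le_sum (fun p hp => hδ p (hmem p hp))
    rw [nsmul_eq_mul] at h1
    have h2 : (M.card : ℚ) ≤ r / δ := by
      rw [le_div_iff₀ hδ0]
      exact le_trans h1 (le_of_lt hgr)
    exact le_trans h2 (Nat.le_ceil _)
  exact LCAux.sum_mem_sumsUpTo F n M (by exact_mod_cast hcard) hmemF

lemma LCAux.supp_subset_closure (s u : LeviCivitaField ℝ) (hsq : s * s = u)
    (hs0 : 0 < coeff s 0) (hsupp : ∀ q ∈ supp s, 0 ≤ q)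
    (G : AddSubmonoid ℚ) (huG : ∀ q ∈ supp u, 0 < q → q ∈ G) :
    ∀ q ∈ supp s, q ∈ G := by
  set X : HahnSeries ℚ ℝ := (s : HahnSeries ℚ ℝ) with hXdef
  by_contra hc
  push_neg at hc
  obtain ⟨q0, hq0s, hq0G⟩ := hc
  set B : Set ℚ := {q ∈ X.support | q ∉ G} with hB
  have hBwf : B.IsWF := X.isWF_support.mono (fun q hq => hq.1)
  have hBne : B.Nonempty := ⟨q0, hq0s, hq0G⟩
  set q := hBwf.min hBne with hqdef
  have hqB : q ∈ B := hBwf.min_mem hBne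
  have hqs : q ∈ X.support := hqB.1
  have hqG : q ∉ G := hqB.2
  have hq0 : 0 < q :=
    lt_of_le_of_ne (hsupp q hqs) (by intro h; exact hqG (h ▸ G.zero_mem))
  have hu0 : (u : HahnSeries ℚ ℝ).coeff q = 0 := by
    by_contra h
    exact hqG (huG q h hq0)
  have hXZ : X * X = (u : HahnSeries ℚ ℝ) := by rw [hXdef, ← hsq]; push_cast; ring
  have hsum : (0 : ℝ) = ∑ ij ∈ Finset.antidiagonal X.isPWO_support X.isPWO_support q,
      X.coeff ij.1 * X.coeff ij.2 := by
    rw [← HahnSeries.coeff_mul, hXZ, hu0]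
  have h0supp : (0 : ℚ) ∈ X.support := by
    exact ne_of_gt hs0
  have hmem1 : ((0 : ℚ), q) ∈ Finset.antidiagonal X.isPWO_support X.isPWO_support q := by
    rw [Finset.mem_antidiagonal]
    exact ⟨h0supp, hqs, zero_add q⟩
  have hmem2 : (q, (0 : ℚ)) ∈ Finset.antidiagonal X.isPWO_support X.isPWO_support q := by
    rw [Finset.mem_antidiagonal]
    exact ⟨hqs, h0supp, add_zero q⟩
  have hsum2 : ∑ ij ∈ Finset.antidiagonal X.isPWO_support X.isPWO_support q,
      X.coeff ij.1 * X.coeff ij.2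
      = X.coeff 0 * X.coeff q + X.coeff q * X.coeff 0 := by
    apply Finset.sum_eq_add_of_mem _ _ hmem1 hmem2
    · intro h
      exact hq0.ne (congrArg Prod.fst h)
    · rintro ⟨c1, c2⟩ hcmem ⟨hc1, hc2⟩
      rw [Finset.mem_antidiagonal] at hcmem
      obtain ⟨hm1, hm2, hm3⟩ := hcmem
      simp only at hm3
      have h1pos : 0 < c1 := by
        rcases (hsupp c1 hm1).lt_or_eq with h | h
        · exact h
        · exact absurd (by rw [← h, zero_add] at hm3; rw [← h, hm3]) hc1
      have h2pos : 0 < c2 := by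
        rcases (hsupp c2 hm2).lt_or_eq with h | h
        · exact h
        · exact absurd (by rw [← h, add_zero] at hm3; rw [← h, hm3]) hc2
      have h1lt : c1 < q := by linarith
      have h2lt : c2 < q := by linarith
      have hg1 : c1 ∈ G := by
        by_contra hng
        exact Set.IsWF.not_lt_min hBwf hBne (⟨hm1, hng⟩ : c1 ∈ B) h1lt
      have hg2 : c2 ∈ G := by
        by_contra hng
        exact Set.IsWF.not_lt_min hBwf hBne (⟨hm2, hng⟩ : c2 ∈ B) h2lt
      exact (hqG (hm3 ▸ G.add_mem hg1 hg2)).elim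
  rw [hsum2] at hsum
  have hx0 : (0 : ℝ) < X.coeff 0 := hs0
  have hz : X.coeff 0 * X.coeff q = 0 := by nlinarith [hsum]
  rcases mul_eq_zero.mp hz with h | h
  · exact hx0.ne' h
  · exact hqs h

lemma LCAux.coeff_def (x : LeviCivitaField ℝ) (q : ℚ) :
    coeff x q = (x : HahnSeries ℚ ℝ).coeff q := rfl

lemma LCAux.coeff_sub (x y : LeviCivitaField ℝ) (q : ℚ) :
    coeff (x - y) q = coeff x q - coeff y q := by
  show ((x - y : LeviCivitaField ℝ) : HahnSeries ℚ ℝ).coeff q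
      = (x : HahnSeries ℚ ℝ).coeff q - (y : HahnSeries ℚ ℝ).coeff q
  push_cast
  simp [HahnSeries.coeff_sub]

lemma LCAux.coeff_add (x y : LeviCivitaField ℝ) (q : ℚ) :
    coeff (x + y) q = coeff x q + coeff y q := by
  show ((x + y : LeviCivitaField ℝ) : HahnSeries ℚ ℝ).coeff q
      = (x : HahnSeries ℚ ℝ).coeff q + (y : HahnSeries ℚ ℝ).coeff q
  push_cast
  simp [HahnSeries.coeff_add]

lemma LCAux.mem_supp_iff (x : LeviCivitaField ℝ) (q : ℚ) :
    q ∈ supp x ↔ coeff x q ≠ 0 := Iff.rfl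

lemma LCAux.wnorm_set_finite (x : LeviCivitaField ℝ) (r : ℝ) :
    {q : ℚ | (q : ℝ) ≤ r ∧ coeff x q ≠ 0}.Finite := by
  apply (leftFinite_supp x ((⌈r⌉ : ℚ) + 1)).subset
  rintro q ⟨hq, hq0⟩
  refine ⟨hq0, ?_⟩
  have h1 : (q : ℝ) < ((⌈r⌉ : ℚ) : ℝ) + 1 := by
    push_cast
    linarith [Int.le_ceil r]
  exact_mod_cast h1

lemma LCAux.wnorm_nonneg (x : LeviCivitaField ℝ) (r : ℝ) : 0 ≤ wnorm x r := by
  rw [wnorm]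
  rcases Set.eq_empty_or_nonempty
      ((fun q : ℚ => ‖coeff x q‖) '' {q : ℚ | (q : ℝ) ≤ r ∧ coeff x q ≠ 0}) with h | h
  · rw [h, Real.sSup_empty]
  · obtain ⟨v, hv⟩ := h
    refine le_trans ?_ (le_csSup (((LCAux.wnorm_set_finite x r).image _).bddAbove) hv)
    obtain ⟨q, _, rfl⟩ := hv
    exact norm_nonneg _

lemma LCAux.abs_coeff_le_wnorm (x : LeviCivitaField ℝ) {r : ℝ} {q : ℚ} (hq : (q : ℝ) ≤ r) :
    |coeff x q| ≤ wnorm x r := by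
  by_cases h : coeff x q = 0
  · simpa [h] using LCAux.wnorm_nonneg x r
  · have := le_csSup (((LCAux.wnorm_set_finite x r).image _).bddAbove)
      (Set.mem_image_of_mem (fun q : ℚ => ‖coeff x q‖) (⟨hq, h⟩ :
        q ∈ {q : ℚ | (q : ℝ) ≤ r ∧ coeff x q ≠ 0}))
    simpa [wnorm, Real.norm_eq_abs] using this

lemma LCAux.wnorm_lt (x : LeviCivitaField ℝ) {r ε : ℝ} (hε : 0 < ε)
    (h : ∀ q : ℚ, (q : ℝ) ≤ r → |coeff x q| < ε) : wnorm x r < ε := by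
  rw [wnorm]
  rcases Set.eq_empty_or_nonempty
      ((fun q : ℚ => ‖coeff x q‖) '' {q : ℚ | (q : ℝ) ≤ r ∧ coeff x q ≠ 0}) with he | hne
  · rw [he, Real.sSup_empty]; exact hε
  · rw [Set.Finite.csSup_lt_iff ((LCAux.wnorm_set_finite x r).image _) hne]
    rintro v ⟨q, ⟨hq, _⟩, rfl⟩
    simpa [Real.norm_eq_abs] using h q hq

lemma LCAux.sqrt_basic (u s : LeviCivitaField ℝ) (hnn : Nonneg s) (hsq : s * s = u)
    (hfin : AtMostFinite u) (hu0 : coeff u 0 ≠ 0) :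
    0 < coeff s 0 ∧ coeff s 0 * coeff s 0 = coeff u 0 ∧ ∀ q : ℚ, q < 0 → coeff s q = 0 := by
  have hu : u ≠ 0 := by
    rintro rfl
    exact hu0 rfl
  have hs : s ≠ 0 := by rintro rfl; rw [mul_zero] at hsq; exact hu hsq.symm
  set X : HahnSeries ℚ ℝ := (s : HahnSeries ℚ ℝ) with hXdef
  set Z : HahnSeries ℚ ℝ := (u : HahnSeries ℚ ℝ) with hZdef
  have hXZ : X * X = Z := by rw [hXdef, hZdef, ← hsq]; push_cast; ring
  have hX : X ≠ 0 := by
    simp only [hXdef, ne_eq, ZeroMemClass.coe_eq_zero]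
    exact hs
  have hZ : Z ≠ 0 := by
    simp only [hZdef, ne_eq, ZeroMemClass.coe_eq_zero]
    exact hu
  have horder : Z.order = X.order + X.order := by
    rw [← hXZ]; exact HahnSeries.order_mul hX hX
  have hZo1 : 0 ≤ Z.order := by
    by_contra hlt
    push_neg at hlt
    exact (HahnSeries.coeff_order_eq_zero.not.2 hZ) (hfin Z.order hlt)
  have hZo2 : Z.order ≤ 0 := by
    by_contra hlt
    push_neg at hlt
    exact hu0 (HahnSeries.coeff_eq_zero_of_lt_order hlt)
  have hZo : Z.order = 0 := le_antisymm hZo2 hZo1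
  have hXo : X.order = 0 := by
    rw [hZo] at horder
    linarith
  rcases hnn with rfl | hpos
  · exact absurd rfl hs
  have hs0 : 0 < coeff s 0 := by
    have := hpos.2
    rwa [show lam s = X.order from rfl, hXo] at this
  refine ⟨hs0, ?_, fun q hq => ?_⟩
  · have := HahnSeries.coeff_mul_order_add_order X X
    rw [hXZ, hXo, add_zero] at this
    have h2 : X.leadingCoeff = X.coeff 0 := by rw [HahnSeries.leadingCoeff_eq, hXo]
    rw [LCAux.coeff_def, LCAux.coeff_def]
    show X.coeff 0 * X.coeff 0 = Z.coeff 0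
    rw [this, h2]
  · exact HahnSeries.coeff_eq_zero_of_lt_order (by rw [hXo]; exact_mod_cast hq)

/-- continuity of weak convergence with respect to taking square roots
for regular, at most finite sequences with `a[0] ≠ 0`. -/
theorem weakTendsto_sqrt (a b : ℕ → LeviCivitaField ℝ) (l m : LeviCivitaField ℝ)
    (hreg : Regular a) (hafin : ∀ k, AtMostFinite (a k)) (hlfin : AtMostFinite l)
    (hconv : WeakTendsto a l) (hl0 : coeff l 0 ≠ 0)
    (hbnn : ∀ k, Nonneg (b k)) (hbsq : ∀ k, b k * b k = a k)
    (hmnn : Nonneg m) (hmsq : m * m = l) :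
    WeakTendsto b m := by
  classical
  obtain ⟨hm0pos, hm0sq, hmneg⟩ := LCAux.sqrt_basic l m hmnn hmsq hlfin hl0
  have hl0pos : 0 < coeff l 0 := by rw [← hm0sq]; exact mul_pos hm0pos hm0pos
  set l0 : ℝ := coeff l 0 with hl0def
  set r0 : ℝ := min (l0 / 2) 1 with hr0def
  have hr0pos : 0 < r0 := lt_min (by linarith) one_pos
  obtain ⟨N₀, hN₀⟩ := hconv r0 hr0pos
  have ha0 : ∀ n, n > N₀ → l0 / 2 < coeff (a n) 0 := by
    intro n hn
    have h1 : |coeff (a n - l) 0| ≤ wnorm (a n - l) (1 / r0) :=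
      LCAux.abs_coeff_le_wnorm _ (by push_cast; positivity)
    have h2 := hN₀ n hn
    rw [LCAux.coeff_sub] at h1
    have h3 : |coeff (a n) 0 - l0| < r0 := lt_of_le_of_lt h1 h2
    have h4 := abs_lt.mp h3
    have h5 : r0 ≤ l0 / 2 := min_le_left _ _
    linarith
  have hbfacts : ∀ n, n > N₀ → 0 < coeff (b n) 0 ∧
      coeff (b n) 0 * coeff (b n) 0 = coeff (a n) 0 ∧
      ∀ q : ℚ, q < 0 → coeff (b n) q = 0 := by
    intro n hn
    refine LCAux.sqrt_basic (a n) (b n) (hbnn n) (hbsq n) (hafin n) ?_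
    have := ha0 n hn
    intro h
    rw [h] at this
    linarith
  set β : ℝ := Real.sqrt (l0 / 2) with hβdef
  have hβpos : 0 < β := Real.sqrt_pos.mpr (by linarith)
  have hβsq : β * β = l0 / 2 := Real.mul_self_sqrt (by linarith)
  have hbge : ∀ n, n > N₀ → β ≤ coeff (b n) 0 := by
    intro n hn
    obtain ⟨hb0, hbsq0, -⟩ := hbfacts n hn
    nlinarith [ha0 n hn]
  have hmge : β ≤ coeff m 0 := by nlinarith
  set S : Set ℚ := (⋃ n, supp (a n)) ∪ (supp l ∪ supp m) with hSdef
  have hS : LeftFinite S :=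
    LeftFinite.union hreg (LeftFinite.union (leftFinite_supp l) (leftFinite_supp m))
  set P : Set ℚ := {q ∈ S | 0 < q} with hPdef
  have hPlf : LeftFinite P := hS.mono (fun q hq => hq.1)
  have hPpos : ∀ p ∈ P, 0 < p := fun _ hp => hp.2
  set G : AddSubmonoid ℚ := AddSubmonoid.closure P with hGdef
  have hGlf : LeftFinite (G : Set ℚ) := LCAux.leftFinite_closure hPlf hPpos
  have hmG : ∀ q ∈ supp m, q ∈ G := by
    apply LCAux.supp_subset_closure m l hmsq hm0pos
    · intro q hq
      by_contra h
      push_neg at h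
      exact hq (hmneg q h)
    · intro q hq hqpos
      exact AddSubmonoid.subset_closure ⟨Or.inr (Or.inl hq), hqpos⟩
  have hbG : ∀ n, n > N₀ → ∀ q ∈ supp (b n), q ∈ G := by
    intro n hn
    obtain ⟨hb0, -, hbneg⟩ := hbfacts n hn
    apply LCAux.supp_subset_closure (b n) (a n) (hbsq n) hb0
    · intro q hq
      by_contra h
      push_neg at h
      exact hq (hbneg q h)
    · intro q hq hqpos
      exact AddSubmonoid.subset_closure ⟨Or.inl (Set.mem_iUnion.mpr ⟨n, hq⟩), hqpos⟩
  -- main weak-convergence estimate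
  intro r hr
  set R : ℚ := max 0 ((⌈(1 / r : ℝ)⌉ : ℚ)) with hRdef
  have hR0 : 0 ≤ R := le_max_left _ _
  have hRge : 1 / r ≤ (R : ℝ) := by
    have h1 : (1 / r : ℝ) ≤ ((⌈(1 / r : ℝ)⌉ : ℚ) : ℝ) := by push_cast; exact Int.le_ceil _
    refine le_trans h1 ?_
    rw [hRdef]
    exact_mod_cast le_max_right (0 : ℚ) ((⌈(1 / r : ℝ)⌉ : ℚ))
  set T : Finset ℚ := (hGlf (R + 1)).toFinset with hTdef
  have hT : ∀ s ∈ (G : Set ℚ), s ≤ R → s ∈ T := by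
    intro s hs hsR
    rw [hTdef, Set.Finite.mem_toFinset]
    exact ⟨hs, by linarith⟩
  set N : ℕ := T.card with hNdef
  set Ml : ℝ := 1 + ∑ q ∈ T, |coeff l q| with hMldef
  have hMl1 : 1 ≤ Ml := le_add_of_nonneg_right (Finset.sum_nonneg fun _ _ => abs_nonneg _)
  have hlG : ∀ q : ℚ, coeff l q ≠ 0 → q ∈ G := by
    intro q hq
    have hq0 : 0 ≤ q := by
      by_contra h
      push_neg at h
      exact hq (hlfin q h)
    rcases hq0.lt_or_eq with h | h
    · exact AddSubmonoid.subset_closure ⟨Or.inr (Or.inl hq), h⟩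
    · rw [← h]; exact G.zero_mem
  have hlbound : ∀ q : ℚ, q ≤ R → |coeff l q| ≤ Ml := by
    intro q hq
    by_cases h : coeff l q = 0
    · rw [h, abs_zero]; linarith
    · have hqT : q ∈ T := hT q (hlG q h) hq
      have := Finset.single_le_sum (f := fun t => |coeff l t|)
        (fun t _ => abs_nonneg _) hqT
      linarith
  set Mm : ℝ := 1 + ∑ q ∈ T, |coeff m q| with hMmdef
  have hmbound : ∀ q : ℚ, q ≤ R → |coeff m q| ≤ Mm := by
    intro q hq
    by_cases h : coeff m q = 0
    · rw [h, abs_zero]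
      have : (0:ℝ) ≤ ∑ q ∈ T, |coeff m q| := Finset.sum_nonneg fun _ _ => abs_nonneg _
      linarith
    · have hqT : q ∈ T := hT q (hmG q h) hq
      have := Finset.single_le_sum (f := fun t => |coeff m t|)
        (fun t _ => abs_nonneg _) hqT
      linarith
  set r1 : ℝ := min 1 (1 / ((R : ℝ) + 1)) with hr1def
  have hRpos : (0:ℝ) ≤ (R:ℝ) := by exact_mod_cast hR0
  have hr1pos : 0 < r1 := lt_min one_pos (by positivity)
  obtain ⟨N₁, hN₁⟩ := hconv r1 hr1pos
  have hrad1 : ∀ q : ℚ, q ≤ R → (q : ℝ) ≤ 1 / r1 := by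
    intro q hq
    have h1 : r1 ≤ 1 / ((R : ℝ) + 1) := min_le_right _ _
    have h2 : (R : ℝ) + 1 ≤ 1 / r1 := by
      have h4 := one_div_le_one_div_of_le hr1pos h1
      rwa [one_div_one_div] at h4
    have h3 : (q : ℝ) ≤ (R : ℝ) := by exact_mod_cast hq
    linarith
  have haebound : ∀ n, n > N₁ → ∀ q : ℚ, q ≤ R → |coeff (a n - l) q| ≤ 1 := by
    intro n hn q hq
    have h1 := LCAux.abs_coeff_le_wnorm (a n - l) (hrad1 q hq)
    have h2 := hN₁ n hn
    have h3 : r1 ≤ 1 := min_le_left _ _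
    linarith
  set Ea : ℝ := Ml + 1 with hEadef
  have habound : ∀ n, n > N₁ → ∀ q : ℚ, 0 ≤ q → q ≤ R → |coeff (a n) q| ≤ Ea := by
    intro n hn q _ hq
    have h1 := haebound n hn q hq
    have h2 := hlbound q hq
    have h3 : coeff (a n) q = coeff (a n - l) q + coeff l q := by
      rw [LCAux.coeff_sub]; ring
    calc |coeff (a n) q| ≤ |coeff (a n - l) q| + |coeff l q| := by
          rw [h3]; exact abs_add_le _ _
      _ ≤ Ea := by rw [hEadef]; linarith
  set Vb : ℝ := LCAux.recSq β Ea N N with hVbdef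
  have hbbound : ∀ n, n > N₀ → n > N₁ → ∀ q : ℚ, q ≤ R → |coeff (b n) q| ≤ Vb := by
    intro n hn0 hn1 q hq
    obtain ⟨hb0, hbsq0, hbneg⟩ := hbfacts n hn0
    have hXX : ((b n : LeviCivitaField ℝ) : HahnSeries ℚ ℝ) *
        ((b n : LeviCivitaField ℝ) : HahnSeries ℚ ℝ) =
        ((a n : LeviCivitaField ℝ) : HahnSeries ℚ ℝ) := by
      have := congrArg (fun t : LeviCivitaField ℝ => (t : HahnSeries ℚ ℝ)) (hbsq n)
      push_cast at this
      exact this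
    refine LCAux.rec_bound_sq _ _ hXX T R hR0 ?_ ?_ β Ea hβpos (hbge n hn0)
      (fun t ht htR => habound n hn1 t ht htR) q hq
    · intro t ht
      by_contra h
      push_neg at h
      exact ht (hbneg t h)
    · intro t ht htR
      exact hT t (hbG n hn0 t ht) htR
  set V : ℝ := Vb + Mm with hVdef
  set K : ℝ := LCAux.recK β V N N with hKdef
  have hK1 : 1 ≤ K := LCAux.recK_one_le β V N N
  have hKpos : 0 < K := lt_of_lt_of_le one_pos hK1
  set r2 : ℝ := min (r / (2 * K)) (min 1 (1 / ((R : ℝ) + 1))) with hr2def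
  have hr2pos : 0 < r2 := lt_min (by positivity) hr1pos
  obtain ⟨N₂, hN₂⟩ := hconv r2 hr2pos
  have hrad2 : ∀ q : ℚ, q ≤ R → (q : ℝ) ≤ 1 / r2 := by
    intro q hq
    have h1 : r2 ≤ 1 / ((R : ℝ) + 1) := le_trans (min_le_right _ _) (min_le_right _ _)
    have h2 : (R : ℝ) + 1 ≤ 1 / r2 := by
      have h4 := one_div_le_one_div_of_le hr2pos h1
      rwa [one_div_one_div] at h4
    have h3 : (q : ℝ) ≤ (R : ℝ) := by exact_mod_cast hq
    linarith
  refine ⟨max (max N₀ N₁) N₂, fun n hn => ?_⟩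
  have hn0 : n > N₀ := lt_of_le_of_lt (le_trans (le_max_left _ _) (le_max_left _ _)) hn
  have hn1 : n > N₁ := lt_of_le_of_lt (le_trans (le_max_right _ _) (le_max_left _ _)) hn
  have hn2 : n > N₂ := lt_of_le_of_lt (le_max_right _ _) hn
  have hebound : ∀ q : ℚ, 0 ≤ q → q ≤ R → |coeff (a n - l) q| ≤ r / (2 * K) := by
    intro q _ hq
    have h1 := LCAux.abs_coeff_le_wnorm (a n - l) (hrad2 q hq)
    have h2 := hN₂ n hn2
    have h3 : r2 ≤ r / (2 * K) := min_le_left _ _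
    linarith
  obtain ⟨hb0, hbsq0, hbneg⟩ := hbfacts n hn0
  have hprod : (b n - m) * (b n + m) = a n - l := by
    calc (b n - m) * (b n + m) = b n * b n - m * m := by ring
      _ = a n - l := by rw [hbsq n, hmsq]
  have hcv : ((b n - m : LeviCivitaField ℝ) : HahnSeries ℚ ℝ) *
      ((b n + m : LeviCivitaField ℝ) : HahnSeries ℚ ℝ) =
      ((a n - l : LeviCivitaField ℝ) : HahnSeries ℚ ℝ) := by
    have := congrArg (fun t : LeviCivitaField ℝ => (t : HahnSeries ℚ ℝ)) hprod
    push_cast at this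
    push_cast
    exact this
  have hcsupp : ∀ t ∈ ((b n - m : LeviCivitaField ℝ) : HahnSeries ℚ ℝ).support, 0 ≤ t := by
    intro t ht
    by_contra h
    push_neg at h
    apply ht
    show coeff (b n - m) t = 0
    rw [LCAux.coeff_sub, hbneg t h, hmneg t h, sub_zero]
  have hvsupp : ∀ t ∈ ((b n + m : LeviCivitaField ℝ) : HahnSeries ℚ ℝ).support, 0 ≤ t := by
    intro t ht
    by_contra h
    push_neg at h
    apply ht
    show coeff (b n + m) t = 0
    rw [LCAux.coeff_add, hbneg t h, hmneg t h, add_zero]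
  have hcT : ∀ t ∈ ((b n - m : LeviCivitaField ℝ) : HahnSeries ℚ ℝ).support,
      t ≤ R → t ∈ T := by
    intro t ht htR
    have htne : coeff (b n - m) t ≠ 0 := ht
    have : coeff (b n) t ≠ 0 ∨ coeff m t ≠ 0 := by
      by_contra h
      push_neg at h
      apply htne
      rw [LCAux.coeff_sub, h.1, h.2, sub_zero]
    rcases this with h | h
    · exact hT t (hbG n hn0 t h) htR
    · exact hT t (hmG t h) htR
  have hv0 : β ≤ ((b n + m : LeviCivitaField ℝ) : HahnSeries ℚ ℝ).coeff 0 := by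
    have : coeff (b n + m) 0 = coeff (b n) 0 + coeff m 0 := LCAux.coeff_add _ _ _
    show β ≤ coeff (b n + m) 0
    rw [this]
    linarith [hbge n hn0, hm0pos]
  have hvV : ∀ t : ℚ, 0 ≤ t → t ≤ R →
      |((b n + m : LeviCivitaField ℝ) : HahnSeries ℚ ℝ).coeff t| ≤ V := by
    intro t _ htR
    have h1 : coeff (b n + m) t = coeff (b n) t + coeff m t := LCAux.coeff_add _ _ _
    show |coeff (b n + m) t| ≤ V
    rw [h1]
    calc |coeff (b n) t + coeff m t| ≤ |coeff (b n) t| + |coeff m t| := abs_add_le _ _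
      _ ≤ Vb + Mm := add_le_add (hbbound n hn0 hn1 t htR) (hmbound t htR)
  have hZE : ∀ t : ℚ, 0 ≤ t → t ≤ R →
      |((a n - l : LeviCivitaField ℝ) : HahnSeries ℚ ℝ).coeff t| ≤ r / (2 * K) := by
    intro t ht htR
    exact hebound t ht htR
  have hcbound := LCAux.rec_bound _ _ _ hcv T R hR0 hcsupp hvsupp hcT
    β V (r / (2 * K)) hβpos hv0 hvV hZE
  apply LCAux.wnorm_lt _ hr
  intro q hq
  have hqR : q ≤ R := by
    have : (q : ℝ) ≤ (R : ℝ) := le_trans hq hRge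
    exact_mod_cast this
  have h1 : |coeff (b n - m) q| ≤ r / (2 * K) * K := hcbound q hqR
  have h2 : r / (2 * K) * K = r / 2 := by
    field_simp
  rw [h2] at h1
  linarith
end SqrtAux
end
end
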